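/- (Remark: the Auslander–Szczarba example has no Spin structure.) Let A be the 5×5 Bott matrix whose rows are (0,0,1,1,0), (0,0,0,1,1), (0,0,0,0,0), (0,0,0,0,0), (0,0,0,0,0). Then there exists no group homomorphism ε from Γ(A) to the group of units of Cl_5 satisfying ε(s_1) ∈ {ι(e_3)ι(e_4), −ι(e_3)ι(e_4)} and ε(s_2) ∈ {ι(e_4)ι(e_5), −ι(e_4)ι(e_5)}. -/

import Mathlib

noncomputable section

open Matrix

/-- The Euclidean group `E(n)`: pairs `(M, b)` with `M ∈ O(n)`, `b ∈ ℝⁿ`,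
acting on `ℝⁿ` by `x ↦ M x + b`. -/
@[ext]
structure EuclideanGroup (n : ℕ) where
  M : Matrix.orthogonalGroup (Fin n) ℝ
  b : Fin n → ℝ

namespace EuclideanGroup

variable {n : ℕ}

instance : Mul (EuclideanGroup n) :=
  ⟨fun g h => ⟨g.M * h.M, (g.M : Matrix (Fin n) (Fin n) ℝ) *ᵥ h.b + g.b⟩⟩

instance : One (EuclideanGroup n) := ⟨⟨1, 0⟩⟩

instance : Inv (EuclideanGroup n) :=
  ⟨fun g => ⟨g.M⁻¹, -(star (g.M : Matrix (Fin n) (Fin n) ℝ) *ᵥ g.b)⟩⟩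

@[simp] theorem mul_M (g h : EuclideanGroup n) : (g * h).M = g.M * h.M := rfl
@[simp] theorem mul_b (g h : EuclideanGroup n) :
    (g * h).b = (g.M : Matrix (Fin n) (Fin n) ℝ) *ᵥ h.b + g.b := rfl
@[simp] theorem one_M : (1 : EuclideanGroup n).M = 1 := rfl
@[simp] theorem one_b : (1 : EuclideanGroup n).b = 0 := rfl
@[simp] theorem inv_M (g : EuclideanGroup n) : g⁻¹.M = g.M⁻¹ := rfl
@[simp] theorem inv_b (g : EuclideanGroup n) :
    g⁻¹.b = -(star (g.M : Matrix (Fin n) (Fin n) ℝ) *ᵥ g.b) := rfl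

instance : Group (EuclideanGroup n) where
  mul_assoc a b c :=
    EuclideanGroup.ext (mul_assoc _ _ _)
      (by simp [Matrix.mulVec_add, Matrix.mulVec_mulVec, add_assoc])
  one_mul a := by ext <;> simp
  mul_one a := by ext <;> simp
  inv_mul_cancel a :=
    EuclideanGroup.ext (inv_mul_cancel _) (by exact add_neg_cancel _)

end EuclideanGroup


/-- A Bott matrix: a strictly upper triangular binary matrix
(entries `0` or `1`, and `A i j = 0` whenever `j ≤ i`). -/
def IsBottMatrix {n : ℕ} (A : Matrix (Fin n) (Fin n) ℕ) : Prop :=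
  (∀ i j : Fin n, A i j = 0 ∨ A i j = 1) ∧ ∀ i j : Fin n, (j : ℕ) ≤ (i : ℕ) → A i j = 0

/-- The diagonal matrix `D_i` with `(k,k)`-entry `(-1) ^ (A i k)`. -/
def Dmat {n : ℕ} (A : Matrix (Fin n) (Fin n) ℕ) (i : Fin n) : Matrix (Fin n) (Fin n) ℝ :=
  Matrix.diagonal fun k => (-1 : ℝ) ^ (A i k)

theorem diagonal_pm_mem_orthogonalGroup {n : ℕ} (d : Fin n → ℝ)
    (hd : ∀ k, d k = 1 ∨ d k = -1) :
    Matrix.diagonal d ∈ Matrix.orthogonalGroup (Fin n) ℝ := by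
  rw [Matrix.mem_orthogonalGroup_iff]
  have : star (Matrix.diagonal d) = Matrix.diagonal d := by
    simp [Matrix.star_eq_conjTranspose, Matrix.diagonal_conjTranspose]
  rw [Matrix.diagonal_transpose, Matrix.diagonal_mul_diagonal]
  have h1 : (fun k => d k * d k) = fun _ => (1 : ℝ) :=
    funext fun k => by rcases hd k with h | h <;> simp [h]
  rw [h1, Matrix.diagonal_one]

theorem Dmat_mem {n : ℕ} (A : Matrix (Fin n) (Fin n) ℕ) (i : Fin n) :
    Dmat A i ∈ Matrix.orthogonalGroup (Fin n) ℝ := by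
  refine diagonal_pm_mem_orthogonalGroup _ fun k => ?_
  rcases Nat.even_or_odd (A i k) with h | h
  · exact Or.inl (h.neg_one_pow)
  · exact Or.inr (h.neg_one_pow)

/-- `D_i` as an element of the orthogonal group. -/
def Dorth {n : ℕ} (A : Matrix (Fin n) (Fin n) ℕ) (i : Fin n) :
    Matrix.orthogonalGroup (Fin n) ℝ :=
  ⟨Dmat A i, Dmat_mem A i⟩

/-- The generators `s_i` of the Bieberbach group of the real Bott manifold `M(A)`:
for `i` with `i + 1 < n` (i.e. the mathematical indices `1 ≤ i ≤ n - 1`),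
`s_i = (D_i, (1/2) e_i)`, and the last generator (mathematical index `n`) is
`s_n = (I, e_n)`.  (Indices are `0`-based.) -/
def sgen {n : ℕ} (A : Matrix (Fin n) (Fin n) ℕ) (i : Fin n) : EuclideanGroup n :=
  if (i : ℕ) + 1 = n then ⟨1, Pi.single i 1⟩
  else ⟨Dorth A i, Pi.single i (1 / 2 : ℝ)⟩

/-- The fundamental group `Γ(A)` of the real Bott manifold `M(A)`, as the subgroup
of `E(n)` generated by `s_1, …, s_n`. -/
def BottGroup {n : ℕ} (A : Matrix (Fin n) (Fin n) ℕ) : Subgroup (EuclideanGroup n) :=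
  Subgroup.closure (Set.range (sgen A))

theorem sgen_mem {n : ℕ} (A : Matrix (Fin n) (Fin n) ℕ) (i : Fin n) :
    sgen A i ∈ BottGroup A :=
  Subgroup.subset_closure (Set.mem_range_self i)

/-- The homomorphism sending an affine isometry `(M, b)` to its linear part `M`. -/
def linearPart (n : ℕ) : EuclideanGroup n →* Matrix.orthogonalGroup (Fin n) ℝ where
  toFun g := g.M
  map_one' := rfl
  map_mul' _ _ := rfl

/-- The standard positive definite quadratic form `Q(x) = x₁² + ⋯ + xₙ²` on `ℝⁿ`. -/
def Qstd (n : ℕ) : QuadraticForm ℝ (Fin n → ℝ) :=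
  QuadraticMap.weightedSumSquares ℝ (fun _ : Fin n => (1 : ℝ))

/-- The Clifford algebra `Cl_n` of `Q(x) = x₁² + ⋯ + xₙ²`. -/
abbrev Cl (n : ℕ) := CliffordAlgebra (Qstd n)

/-- For a finite set `S = {s₁ < s₂ < ⋯ < s_k} ⊆ {1, …, n}`, the product
`e_S = ι(e_{s₁}) ι(e_{s₂}) ⋯ ι(e_{s_k})` in `Cl_n` (with `e_∅ = 1`). -/
def eProd {n : ℕ} (S : Finset (Fin n)) : Cl n :=
  ((S.sort (· ≤ ·)).map fun j => CliffordAlgebra.ι (Qstd n) (Pi.single j 1)).prod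


/-- The Bott matrix of the Auslander–Szczarba example. -/
def Aas : Matrix (Fin 5) (Fin 5) ℕ :=
  !![0,0,1,1,0; 0,0,0,1,1; 0,0,0,0,0; 0,0,0,0,0; 0,0,0,0,0]

/-! `D₁` fixes `e₂` and `D₂` fixes `e₁`, so `s₁` and `s₂` commute in `Γ(A)`, and
hence so would `ε(s₁)` and `ε(s₂)`.  But `e₃e₄` and `e₄e₅` anticommute in `Cl₅`, and a pair of
units cannot both commute and anticommute once `2` is invertible. -/

theorem Dmat_mulVec_single_of_eq_zero {n : ℕ} {A : Matrix (Fin n) (Fin n) ℕ} {i j : Fin n}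
    (h : A i j = 0) (x : ℝ) : Dmat A i *ᵥ Pi.single j x = Pi.single j x := by
  rw [Dmat, diagonal_mulVec_single, h, pow_zero, one_mul]

theorem sgen_commute {n : ℕ} {A : Matrix (Fin n) (Fin n) ℕ} {i j : Fin n}
    (hi : (i : ℕ) + 1 ≠ n) (hj : (j : ℕ) + 1 ≠ n) (hij : A i j = 0) (hji : A j i = 0) :
    Commute (sgen A i) (sgen A j) := by
  rw [Commute, SemiconjBy, sgen, sgen, if_neg hi, if_neg hj]
  ext : 1
  · refine Subtype.ext (?_ : Dmat A i * Dmat A j = Dmat A j * Dmat A i)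
    simp only [Dmat, diagonal_mul_diagonal, mul_comm]
  · simp only [EuclideanGroup.mul_b, Dorth, Dmat_mulVec_single_of_eq_zero hij,
      Dmat_mulVec_single_of_eq_zero hji, add_comm]

theorem Qstd_isOrtho_single {n : ℕ} {i j : Fin n} (h : i ≠ j) :
    (Qstd n).IsOrtho (Pi.single i 1) (Pi.single j 1) := by
  simp [QuadraticMap.isOrtho_def, Qstd, QuadraticMap.weightedSumSquares_apply, Pi.single_apply,
    mul_add, Finset.sum_add_distrib, h, h.symm]

theorem mul_anticomm_mul_of_anticomm {R : Type*} [Ring R] {a b c : R}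
    (hab : a * b = -(b * a)) (hbc : b * c = -(c * b)) (hac : a * c = -(c * a)) :
    b * c * (a * b) = -(a * b * (b * c)) := by
  have swap {x y : R} (h : x * y = -(y * x)) : y * x = -(x * y) := by rw [h, neg_neg]
  calc b * c * (a * b) = b * (c * a) * b := by noncomm_ring
    _ = -(b * a * (c * b)) := by rw [swap hac]; noncomm_ring
    _ = a * b * (c * b) := by rw [swap hab]; noncomm_ring
    _ = -(a * b * (b * c)) := by rw [swap hbc]; noncomm_ring

theorem Units.val_mul_ne_neg_of_commute {R : Type*} [Ring R] [Nontrivial R] (h2 : IsUnit (2 : R))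
    {u v : Rˣ} (huv : Commute u v) : (u * v : R) ≠ -(v * u) := by
  intro h
  have : (2 : R) * (u * v) = 0 := by
    rw [two_mul]
    nth_rewrite 2 [huv.units_val.eq]
    rw [h, neg_add_cancel]
  rw [h2.mul_right_eq_zero, ← Units.val_mul] at this
  exact (u * v).ne_zero this

/-- Remark.  The Auslander–Szczarba real Bott manifold has no Spin
structure: no group homomorphism `ε : Γ(A) → Cl₅ˣ` satisfies `ε(s₁) = ± ι(e₃) ι(e₄)` and
`ε(s₂) = ± ι(e₄) ι(e₅)` (indices `0`-based below). -/
theorem auslander_szczarba_no_spin :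
    ¬∃ ε : BottGroup Aas →* (Cl 5)ˣ,
      (((ε ⟨sgen Aas 0, sgen_mem Aas 0⟩ : (Cl 5)ˣ) : Cl 5) =
          CliffordAlgebra.ι (Qstd 5) (Pi.single 2 1) *
            CliffordAlgebra.ι (Qstd 5) (Pi.single 3 1) ∨
        ((ε ⟨sgen Aas 0, sgen_mem Aas 0⟩ : (Cl 5)ˣ) : Cl 5) =
          -(CliffordAlgebra.ι (Qstd 5) (Pi.single 2 1) *
            CliffordAlgebra.ι (Qstd 5) (Pi.single 3 1))) ∧
      (((ε ⟨sgen Aas 1, sgen_mem Aas 1⟩ : (Cl 5)ˣ) : Cl 5) =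
          CliffordAlgebra.ι (Qstd 5) (Pi.single 3 1) *
            CliffordAlgebra.ι (Qstd 5) (Pi.single 4 1) ∨
        ((ε ⟨sgen Aas 1, sgen_mem Aas 1⟩ : (Cl 5)ˣ) : Cl 5) =
          -(CliffordAlgebra.ι (Qstd 5) (Pi.single 3 1) *
            CliffordAlgebra.ι (Qstd 5) (Pi.single 4 1))) := by
  rintro ⟨ε, h₀, h₁⟩
  have hcomm : Commute (ε ⟨sgen Aas 0, sgen_mem Aas 0⟩) (ε ⟨sgen Aas 1, sgen_mem Aas 1⟩) :=
    Commute.map (Subtype.ext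
      (sgen_commute (A := Aas) (i := 0) (j := 1) (by decide) (by decide) rfl rfl).eq) ε
  have ι_anticomm {i j : Fin 5} (h : i ≠ j) :
      CliffordAlgebra.ι (Qstd 5) (Pi.single i 1) * CliffordAlgebra.ι (Qstd 5) (Pi.single j 1) =
        -(CliffordAlgebra.ι (Qstd 5) (Pi.single j 1) * CliffordAlgebra.ι (Qstd 5) (Pi.single i 1)) :=
    CliffordAlgebra.ι_mul_ι_comm_of_isOrtho (Qstd_isOrtho_single h)
  have hanti := mul_anticomm_mul_of_anticomm (ι_anticomm (i := 2) (j := 3) (by decide))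
    (ι_anticomm (i := 3) (j := 4) (by decide)) (ι_anticomm (i := 2) (j := 4) (by decide))
  have h2 : IsUnit (2 : Cl 5) := by
    have := (IsUnit.mk0 (2 : ℝ) two_ne_zero).map (algebraMap ℝ (Cl 5))
    rwa [map_ofNat] at this
  refine Units.val_mul_ne_neg_of_commute h2 hcomm ?_
  rcases h₀ with h₀ | h₀ <;> rcases h₁ with h₁ | h₁ <;>
    simp only [h₀, h₁, hanti, neg_mul, mul_neg, neg_neg]
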